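/- Every horizontal compression rule application preserves the Leveled-Colored property: if the colored deduction subgraph of a valid DLDS is a leveled rooted DAG (every deduction edge connects consecutive levels and r is the root), then after collapsing two same-level, same-label nodes by any compression rule, the resulting structure is again a leveled rooted DAG with the same root and the same height. -/

import Mathlib

/-- Formulas of the purely implicational fragment `M⊃` of minimal logic. -/
inductive Formula : Type
  | var : ℕ → Formula
  | imp : Formula → Formula → Formula
  deriving DecidableEq

/-- Colors of deduction edges: an ordinal color (with `ord 0` the default
color of uncollapsed edges) or the special color `λ`. -/
inductive Color : Type
  | ord : ℕ → Color
  | lam : Color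
  deriving DecidableEq

/-- A dag-like derivability structure (DLDS): colored deduction edges `ED`,
ancestor edges `EA`, hypothesis marks `hyp`, root `r`, levels, formula labels
`l`, dependency-set labels `L` on deduction edges, and relative-address path
labels `P` on ancestor edges. -/
structure DLDS (V : Type) where
  ED : Color → V → V → Prop
  EA : V → V → Prop
  hyp : V → Prop
  r : V
  level : V → ℕ
  l : V → Formula
  L : Color → V → V → Finset Formula
  P : V → V → List Color

/-- The set of outgoing deduction edges (color, target) of a node. -/
def DLDS.outs {V : Type} (D : DLDS V) (u : V) : Set (Color × V) :=
  {p | D.ED p.1 u p.2}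

/-- The relative-address resolution algorithm: starting at `u` and following
the address `γ`, at a node with a unique outgoing deduction edge follow it
(without consuming), at a node with several outgoing edges follow the unique
edge whose color is the head of the remaining address, consuming it; an empty
remaining address stops. `Resolves D u γ v` holds when the walk reaches `v`. -/
inductive Resolves {V : Type} (D : DLDS V) : V → List Color → V → Prop
  | done (u : V) : Resolves D u [] u
  | single {u w v : V} {c : Color} {γ : List Color} :
      (D.outs u).ncard = 1 → D.ED c u w → γ ≠ [] →
      Resolves D w γ v → Resolves D u γ v
  | branch {u w v : V} {c : Color} {γ : List Color} :
      1 < (D.outs u).ncard → D.ED c u w →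
      (∀ c' w', D.ED c' u w' → c' = c → w' = w) →
      Resolves D w γ v → Resolves D u (c :: γ) v

/-- Validity of a DLDS (graph-theoretic part): the colored deduction graph is
leveled with root at level 0, color-acyclic and simple, ancestor edges go from
strictly lower to higher levels, and `P` records relative addresses. -/
structure DLDS.Valid {V : Type} (D : DLDS V) : Prop where
  leveled : ∀ c a b, D.ED c a b → D.level a = D.level b + 1
  rootLevel : D.level D.r = 0
  colorAcyclic : ∀ c a, ¬ Relation.TransGen (D.ED c) a a
  simple : ∀ a b c c', D.ED c a b → D.ED c' a b → c = c'
  targetUnique : ∀ c a b b', D.ED c a b → D.ED c a b' → b = b'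
  ancLevel : ∀ a b, D.EA a b → D.level a < D.level b
  backway : ∀ a b, D.EA a b → Resolves D b (D.P a b) a

/-- Merging `v` into `u`. -/
def merge {V : Type} [DecidableEq V] (u v x : V) : V := if x = v then u else x

/-- A generic horizontal compression rule application (`HCom(u,v)`) collapsing
the same-level, same-label nodes `u` and `v`: levels, labels and the root are
unchanged, every deduction edge of the result is the image under the merge of
a deduction edge of the input (possibly recolored), and ancestor edges of the
result go from lower to strictly higher levels. -/
structure Collapse {V : Type} [DecidableEq V] (D D' : DLDS V) (u v : V) : Prop where
  ne : u ≠ v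
  sameLevel : D.level u = D.level v
  sameLabel : D.l u = D.l v
  level_eq : ∀ x, D'.level x = D.level x
  label_eq : ∀ x, D'.l x = D.l x
  root_eq : D'.r = D.r
  ed_image : ∀ c a b, D'.ED c a b →
      ∃ c' a' b', D.ED c' a' b' ∧ a = merge u v a' ∧ b = merge u v b'
  ea_up : ∀ a b, D'.EA a b → D'.level a < D'.level b

/-- The height of a DLDS: the maximal level. -/
def DLDS.height {V : Type} [Fintype V] (D : DLDS V) : ℕ :=
  Finset.univ.sup D.level

/-!
Merging identifies only two nodes of the same level, so every deduction edge of the collapse,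
being the image of an edge of `D`, still drops exactly one level. Hence levels strictly decrease
along deduction paths of any color, which rules out cycles and edges out of the level-0 root;
levels, and therefore the height, are untouched.
-/

theorem apply_merge_of_eq {V : Type} {α : Type*} [DecidableEq V] {f : V → α} {u v : V}
    (h : f u = f v) (x : V) : f (merge u v x) = f x := by
  unfold merge
  split_ifs with hx
  · rw [hx, h]
  · rfl

theorem Relation.TransGen.lt_of_map_lt {α β : Type*} [Preorder β] {r : α → α → Prop}
    {f : α → β} (hf : ∀ a b, r a b → f b < f a) {a b : α}
    (hab : Relation.TransGen r a b) : f b < f a := by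
  induction hab with
  | single h => exact hf _ _ h
  | tail _ h ih => exact (hf _ _ h).trans ih

theorem Relation.transGen_irrefl_of_map_lt {α β : Type*} [Preorder β] {r : α → α → Prop}
    {f : α → β} (hf : ∀ a b, r a b → f b < f a) (a : α) : ¬ Relation.TransGen r a a :=
  fun h => (h.lt_of_map_lt hf).false

namespace Collapse

variable {V : Type} [DecidableEq V] {D D' : DLDS V} {u v : V}

theorem leveled (hc : Collapse D D' u v)
    (hD : ∀ c a b, D.ED c a b → D.level a = D.level b + 1) :
    ∀ c a b, D'.ED c a b → D'.level a = D'.level b + 1 := by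
  intro c a b h
  obtain ⟨c', a', b', hE, rfl, rfl⟩ := hc.ed_image c a b h
  rw [hc.level_eq, hc.level_eq, apply_merge_of_eq hc.sameLevel,
    apply_merge_of_eq hc.sameLevel]
  exact hD c' a' b' hE

theorem level_root (hc : Collapse D D' u v) (hD : D.level D.r = 0) : D'.level D'.r = 0 := by
  rw [hc.level_eq, hc.root_eq, hD]

theorem height_eq [Fintype V] (hc : Collapse D D' u v) : D'.height = D.height := by
  unfold DLDS.height
  rw [funext hc.level_eq]

end Collapse

/-- every compression rule application preserves the
Leveled-Colored property: after collapsing two same-level, same-label nodes,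
the colored deduction graph is again a leveled rooted DAG with the same root
(of level 0 and out-degree 0) and the same height. -/
theorem collapse_preserves_leveled {V : Type} [Fintype V] [DecidableEq V]
    (D D' : DLDS V) (u v : V) (hval : D.Valid) (hc : Collapse D D' u v) :
    (∀ c a b, D'.ED c a b → D'.level a = D'.level b + 1) ∧
    D'.r = D.r ∧ D'.level D'.r = 0 ∧
    (∀ c w, ¬ D'.ED c D'.r w) ∧
    (∀ c a, ¬ Relation.TransGen (D'.ED c) a a) ∧
    D'.height = D.height := by
  have hlev := hc.leveled hval.leveled
  have hlev_lt : ∀ c a b, D'.ED c a b → D'.level b < D'.level a := fun c a b h => by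
    rw [hlev c a b h]
    exact Nat.lt_succ_self _
  have hroot := hc.level_root hval.rootLevel
  refine ⟨hlev, hc.root_eq, hroot, fun c w h => ?_,
    fun c => Relation.transGen_irrefl_of_map_lt (hlev_lt c), hc.height_eq⟩
  exact Nat.not_lt_zero _ (hroot ▸ hlev_lt c _ w h)
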